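/- arXiv:2205.10096 — 2 statements merged into one kernel-verified Lean document; each statement's English description precedes it below -/
import Mathlib

section
/- Let Λ be a finite graph where each edge e carries a real weight ∠(e), and suppose every semi-embedded closed walk has total weight > 2π. Then there exists ν₀ > 2π such that every closed walk in Λ that is immersed (no backtracking) and essential has total weight ≥ ν₀; consequently any closed immersed essential walk σ satisfies |σ|_∠ > 2π, since every such walk decomposes as a concatenation of semi-embedded closed walks. -/
/-!
A closed walk that traverses some dart twice, say as `A d B d C`, is the concatenation of the
closed walks `d B` and `A d C`, both nonempty and strictly shorter, and its weight is the sum of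
theirs. By induction on length every nontrivial closed walk is therefore a concatenation of
semi-embedded closed walks, so its weight is at least the least weight `ν₀` of a semi-embedded
closed walk, which exists (and exceeds `2π`) because a semi-embedded walk is determined by its
dart list, a duplicate-free list over a finite type. Positivity of `ν₀` makes the bound survive
concatenation.
-/

open Real

theorem List.Duplicate.exists_eq_append_cons_append_cons {α : Type*} {x : α} {l : List α}
    (h : List.Duplicate x l) : ∃ A B C, l = A ++ x :: (B ++ x :: C) := by
  induction h with
  | cons_mem hx =>
    obtain ⟨B, C, rfl⟩ := List.append_of_mem hx
    exact ⟨[], B, C, rfl⟩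
  | @cons_duplicate y _ _ ih =>
    obtain ⟨A, B, C, rfl⟩ := ih
    exact ⟨y :: A, B, C, rfl⟩

theorem List.finite_setOf_nodup (α : Type*) [Finite α] : {l : List α | l.Nodup}.Finite := by
  have := Fintype.ofFinite α
  exact (List.finite_length_le α (Fintype.card α)).subset fun _ hl => hl.length_le_card

theorem Set.Finite.exists_lt_forall_le {α : Type*} [LinearOrder α] [NoMaxOrder α] {s : Set α}
    (hs : s.Finite) {a : α} (h : ∀ x ∈ s, a < x) : ∃ b, a < b ∧ ∀ x ∈ s, b ≤ x := by
  obtain ⟨c, hc⟩ := exists_gt a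
  obtain ⟨b, hb, hmin⟩ := Set.exists_min_image (insert c s) id (hs.insert c) ⟨c, mem_insert _ _⟩
  refine ⟨b, ?_, fun x hx => hmin x (mem_insert_of_mem _ hx)⟩
  rcases hb with rfl | hb
  · exact hc
  · exact h b hb

namespace SimpleGraph

variable {V : Type*} {G : SimpleGraph V}

instance [Finite V] : Finite G.Dart := Finite.of_injective _ Dart.toProd_injective

namespace Walk

theorem exists_darts_eq_of_darts_eq_append_cons {d : G.Dart} {L : List G.Dart} :
    ∀ (A : List G.Dart) {u v : V} (p : G.Walk u v), p.darts = A ++ d :: L →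
      ∃ (q : G.Walk u d.fst) (r : G.Walk d.snd v), q.darts = A ∧ r.darts = L
  | [], _, _, nil, h => by simp at h
  | [], _, _, cons _ p, h => by
    obtain ⟨rfl, rfl⟩ := List.cons_eq_cons.mp h
    exact ⟨nil, p, rfl, rfl⟩
  | _ :: _, _, _, nil, h => by simp at h
  | _ :: A, _, _, cons hadj p, h => by
    obtain ⟨rfl, hp⟩ := List.cons_eq_cons.mp h
    obtain ⟨q, r, rfl, rfl⟩ := exists_darts_eq_of_darts_eq_append_cons A p hp
    exact ⟨cons hadj q, r, rfl, rfl⟩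

/-- The weight `|σ|_∠` of a walk. -/
def weight (w : Sym2 V → ℝ) {u v : V} (p : G.Walk u v) : ℝ := (p.edges.map w).sum

theorem weight_eq_sum_darts (w : Sym2 V → ℝ) {u v : V} (p : G.Walk u v) :
    p.weight w = (p.darts.map fun d => w d.edge).sum := by
  simp only [weight, edges, List.map_map, Function.comp_def]

/-- A walk that traverses some dart twice, as `A d B d C`, splits into the closed walk `d B`
and the shorter walk `A d C`. -/
theorem exists_weight_eq_add_of_not_nodup_darts (w : Sym2 V → ℝ) {u v : V} (p : G.Walk u v)
    (h : ¬ p.darts.Nodup) :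
    ∃ (x : V) (m : G.Walk x x) (o : G.Walk u v), m.length ≠ 0 ∧ o.length ≠ 0 ∧
      m.length < p.length ∧ o.length < p.length ∧ p.weight w = m.weight w + o.weight w := by
  obtain ⟨d, hd⟩ := List.exists_duplicate_iff_not_nodup.mpr h
  obtain ⟨A, B, C, hp⟩ := hd.exists_eq_append_cons_append_cons
  obtain ⟨q, r, rfl, hr⟩ := exists_darts_eq_of_darts_eq_append_cons _ p hp
  obtain ⟨r₁, r₂, rfl, rfl⟩ := exists_darts_eq_of_darts_eq_append_cons _ r hr
  refine ⟨d.fst, cons d.adj r₁, q.append (cons d.adj r₂), by simp, by simp, ?_, ?_, ?_⟩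
  iterate 2
    simp only [← length_darts, hp, darts_cons, darts_append, List.length_append, List.length_cons]
    omega
  · simp only [weight_eq_sum_darts, hp, darts_cons, darts_append, List.map_append,
      List.map_cons, List.sum_append, List.sum_cons]
    ring

theorem le_weight_of_forall_darts_nodup (w : Sym2 V → ℝ) {c : ℝ} (hc : 0 ≤ c)
    (hnodup : ∀ (v : V) (σ : G.Walk v v), σ.length ≠ 0 → σ.darts.Nodup → c ≤ σ.weight w)
    (v : V) (σ : G.Walk v v) (hσ : σ.length ≠ 0) : c ≤ σ.weight w := by
  induction hn : σ.length using Nat.strong_induction_on generalizing v σ with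
  | _ n ih =>
    by_cases hσd : σ.darts.Nodup
    · exact hnodup v σ hσ hσd
    obtain ⟨x, m, o, hm, ho, hmσ, hoσ, hw⟩ := exists_weight_eq_add_of_not_nodup_darts w σ hσd
    have := ih _ (hn ▸ hmσ) x m hm rfl
    have := ih _ (hn ▸ hoσ) v o ho rfl
    linarith

theorem finite_setOf_weight_darts_nodup [Finite V] (w : Sym2 V → ℝ) :
    {x | ∃ (v : V) (σ : G.Walk v v), σ.darts.Nodup ∧ σ.weight w = x}.Finite := by
  refine ((List.finite_setOf_nodup G.Dart).image fun l => (l.map fun d => w d.edge).sum).subset ?_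
  rintro _ ⟨v, σ, hσ, rfl⟩
  exact ⟨σ.darts, hσ, (weight_eq_sum_darts w σ).symm⟩

end Walk

end SimpleGraph

theorem link_weight_test_general {V : Type*} [Fintype V]
    (Λ : SimpleGraph V)
    (w : Sym2 V → ℝ)
    (hsemi : ∀ (v : V) (σ : Λ.Walk v v), σ.length ≠ 0 → σ.darts.Nodup →
      2 * π < (σ.edges.map w).sum) :
    ∃ ν₀ : ℝ, 2 * π < ν₀ ∧
      ∀ (v : V) (σ : Λ.Walk v v), σ.length ≠ 0 →
        List.Chain' (fun d e => e ≠ d.symm) (σ.darts ++ σ.darts.take 1) →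
        ν₀ ≤ (σ.edges.map w).sum ∧ 2 * π < (σ.edges.map w).sum := by
  let S := {x | ∃ (v : V) (σ : Λ.Walk v v), σ.length ≠ 0 ∧ σ.darts.Nodup ∧ σ.weight w = x}
  have hS : S.Finite := (SimpleGraph.Walk.finite_setOf_weight_darts_nodup w).subset
    fun _ ⟨v, σ, _, hσ, hx⟩ => ⟨v, σ, hσ, hx⟩
  obtain ⟨ν₀, hν₀, hν₀S⟩ := hS.exists_lt_forall_le (a := 2 * π) fun _ ⟨v, σ, hσ, hσd, hx⟩ =>
    hx ▸ hsemi v σ hσ hσd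
  refine ⟨ν₀, hν₀, fun v σ hσ _ => ?_⟩
  have hle : ν₀ ≤ σ.weight w :=
    SimpleGraph.Walk.le_weight_of_forall_darts_nodup w (by linarith [pi_pos])
      (fun u τ hτ hτd => hν₀S _ ⟨u, τ, hτ, hτd, rfl⟩) v σ hσ
  exact ⟨hle, hν₀.trans_le hle⟩

/-- Let `Λ` be a finite graph with a real weight on each edge, and suppose every
nontrivial semi-embedded closed walk (traversing each edge at most once in each
direction) has total weight `> 2π`.  Then there is `ν₀ > 2π` such that every
essential closed walk that is immersed (no backtracking, including cyclically)
has total weight `≥ ν₀`; in particular its weight is `> 2π`. -/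
theorem link_weight_test {V : Type*} [Fintype V] [DecidableEq V]
    (Λ : SimpleGraph V) [DecidableRel Λ.Adj]
    (w : Sym2 V → ℝ)
    (hsemi : ∀ (v : V) (σ : Λ.Walk v v), σ.length ≠ 0 → σ.darts.Nodup →
      2 * π < (σ.edges.map w).sum) :
    ∃ ν₀ : ℝ, 2 * π < ν₀ ∧
      ∀ (v : V) (σ : Λ.Walk v v), σ.length ≠ 0 →
        List.Chain' (fun d e => e ≠ d.symm) (σ.darts ++ σ.darts.take 1) →
        ν₀ ≤ (σ.edges.map w).sum ∧ 2 * π < (σ.edges.map w).sum :=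
  link_weight_test_general Λ w hsemi
end

section
/- Exponential divergence of geodesics: let X be a δ-hyperbolic geodesic metric space. There exists an exponential function e(r) (depending only on δ) with the property that for all R, r ∈ ℕ, all x ∈ X and all geodesics c₁ : [0,a₁] → X, c₂ : [0,a₂] → X with c₁(0) = c₂(0) = x, if R + r ≤ min{a₁, a₂} and d(c₁(R), c₂(R)) > e(0), then any rectifiable path from c₁(R+r) to c₂(R+r) that stays outside the open ball B(x, R+r) has length at least e(r). -/
open Set

/-- `f` restricted to `S ⊆ ℝ` is a (unit-speed) geodesic. -/
def IsGeodesicOn {X : Type*} [MetricSpace X] (f : ℝ → X) (S : Set ℝ) : Prop :=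
  ∀ s ∈ S, ∀ t ∈ S, dist (f s) (f t) = |s - t|

/-- `X` is a geodesic metric space: any two points are joined by a geodesic. -/
def GeodesicSpace (X : Type*) [MetricSpace X] : Prop :=
  ∀ x y : X, ∃ f : ℝ → X,
    IsGeodesicOn f (Icc 0 (dist x y)) ∧ f 0 = x ∧ f (dist x y) = y

/-- Every geodesic triangle of `X` is `δ`-slim: each side lies in the
`δ`-neighbourhood of the union of the other two sides. -/
def SlimTriangles (X : Type*) [MetricSpace X] (δ : ℝ) : Prop :=
  ∀ (f g h : ℝ → X) (a b c : ℝ), 0 ≤ a → 0 ≤ b → 0 ≤ c →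
    IsGeodesicOn f (Icc 0 a) → IsGeodesicOn g (Icc 0 b) → IsGeodesicOn h (Icc 0 c) →
    f a = g 0 → g b = h 0 → h c = f 0 →
    ∀ t ∈ Icc 0 c, ∃ s,
      (s ∈ Icc 0 a ∧ dist (h t) (f s) ≤ δ) ∨ (s ∈ Icc 0 b ∧ dist (h t) (g s) ≤ δ)

/-- Two rays are asymptotic (represent the same point of the Gromov boundary):
they remain at uniformly bounded distance. -/
def Asymp {X : Type*} [MetricSpace X] (f g : ℝ → X) : Prop :=
  ∃ C : ℝ, ∀ t : ℝ, 0 ≤ t → dist (f t) (g t) ≤ C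

/-!
Cut the path greedily, by the intermediate value theorem, at points `p tᵢ` that are one apart;
if its length is less than `2 ^ n` this takes at most `2 ^ n` steps. Bisecting this chain `n` times
and using slim triangles shows that a geodesic `f` joining the endpoints of the path stays within
`n δ + 1` of the path. Since `c₁, c₂` are more than `2 δ` apart at time `R - M`, the slim triangle
`x, c₁ (R + r), c₂ (R + r)` puts `c₁ (R - M)` within `δ` of `f`, so the path comes within
`R - M + (n + 1) δ + 1` of `x`. Outside `B(x, R + r)` this forces `n δ ≥ r + M - δ - 1`, which for
`M` a large multiple of `δ` gives length at least `A 2 ^ (r / δ)`.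
-/

namespace IsGeodesicOn

variable {X : Type*} [MetricSpace X] {f g : ℝ → X} {S T : Set ℝ} {L : ℝ}

lemma mono (hf : IsGeodesicOn f T) (hST : S ⊆ T) : IsGeodesicOn f S :=
  fun s hs t ht => hf s (hST hs) t (hST ht)

lemma reverse (hf : IsGeodesicOn f (Icc 0 L)) : IsGeodesicOn (fun t => f (L - t)) (Icc 0 L) := by
  intro s hs t ht
  rw [hf _ ⟨by linarith [hs.2], by linarith [hs.1]⟩ _ ⟨by linarith [ht.2], by linarith [ht.1]⟩,
    ← abs_neg]
  ring_nf

lemma dist_zero (hf : IsGeodesicOn f (Icc 0 L)) {u : ℝ} (hu : u ∈ Icc 0 L) :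
    dist (f 0) (f u) = u := by
  rw [hf 0 ⟨le_rfl, hu.1.trans hu.2⟩ u hu, zero_sub, abs_neg, abs_of_nonneg hu.1]

lemma dist_le_two_mul (hf : IsGeodesicOn f (Icc 0 L)) (hg : IsGeodesicOn g (Icc 0 L))
    (h0 : f 0 = g 0) (hL : 0 ≤ L) : dist (f L) (g L) ≤ 2 * L := by
  calc dist (f L) (g L) ≤ dist (f 0) (f L) + dist (g 0) (g L) := by
        rw [h0]; exact dist_triangle_left _ _ _
    _ = 2 * L := by rw [hf.dist_zero ⟨hL, le_rfl⟩, hg.dist_zero ⟨hL, le_rfl⟩]; ring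

lemma dist_le_dist_sub_add (hf : IsGeodesicOn f (Icc 0 L)) (hg : IsGeodesicOn g (Icc 0 L))
    {M : ℝ} (hM : M ∈ Icc 0 L) :
    dist (f L) (g L) ≤ dist (f (L - M)) (g (L - M)) + 2 * M := by
  have hL : L ∈ Icc 0 L := ⟨hM.1.trans hM.2, le_rfl⟩
  have hLM : L - M ∈ Icc 0 L := ⟨by linarith [hM.2], by linarith [hM.1]⟩
  calc dist (f L) (g L)
      ≤ dist (f L) (f (L - M)) + dist (f (L - M)) (g (L - M)) + dist (g (L - M)) (g L) :=
        dist_triangle4 _ _ _ _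
    _ = dist (f (L - M)) (g (L - M)) + 2 * M := by
        rw [hf _ hL _ hLM, hg _ hLM _ hL, sub_sub_cancel, sub_sub_cancel_left, abs_neg,
          abs_of_nonneg hM.1]
        ring

end IsGeodesicOn

section Chain

variable {X : Type*} [MetricSpace X] {p : ℝ → X} {a b : ℝ}

lemma exists_dist_le_one_and_eq_or_eq_one (hab : a ≤ b) (hp : ContinuousOn p (Icc a b)) :
    ∃ u ∈ Icc a b, dist (p a) (p u) ≤ 1 ∧ (u = b ∨ dist (p a) (p u) = 1) := by
  by_cases hb : dist (p a) (p b) ≤ 1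
  · exact ⟨b, ⟨hab, le_rfl⟩, hb, Or.inl rfl⟩
  · obtain ⟨u, hu, hpu⟩ := intermediate_value_Icc hab
      ((continuous_const.dist continuous_id).comp_continuousOn hp)
      (show (1 : ℝ) ∈ Icc (dist (p a) (p a)) (dist (p a) (p b)) by
        rw [dist_self]; exact ⟨zero_le_one, (not_le.1 hb).le⟩)
    exact ⟨u, hu, hpu.le, Or.inr hpu⟩

theorem exists_chain_of_eVariationOn_lt (hab : a ≤ b) (hp : ContinuousOn p (Icc a b)) {m : ℕ}
    (hm : eVariationOn p (Icc a b) < m) :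
    ∃ t : ℕ → ℝ, (∀ i, t i ∈ Icc a b) ∧ t 0 = a ∧ t m = b ∧
      ∀ i, dist (p (t i)) (p (t (i + 1))) ≤ 1 := by
  have step (c : ℝ) (hc : c ∈ Icc a b) :
      ∃ u ∈ Icc c b, dist (p c) (p u) ≤ 1 ∧ (u = b ∨ dist (p c) (p u) = 1) :=
    exists_dist_le_one_and_eq_or_eq_one hc.2 (hp.mono (Icc_subset_Icc_left hc.1))
  choose! next hnext_mem hnext_le hnext_eq using step
  set t : ℕ → ℝ := fun i => next^[i] a
  have ht_succ (i : ℕ) : t (i + 1) = next (t i) := Function.iterate_succ_apply' next i a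
  have ht_mem (i : ℕ) : t i ∈ Icc a b := by
    induction i with
    | zero => exact ⟨le_rfl, hab⟩
    | succ i ih =>
      rw [ht_succ]
      exact ⟨ih.1.trans (hnext_mem _ ih).1, (hnext_mem _ ih).2⟩
  have ht_mono : Monotone t := monotone_nat_of_le_succ fun i => by
    rw [ht_succ]; exact (hnext_mem _ (ht_mem i)).1
  refine ⟨t, ht_mem, rfl, ?_, fun i => ht_succ i ▸ hnext_le _ (ht_mem i)⟩
  by_contra hne
  have hlt : t m < b := lt_of_le_of_ne (ht_mem m).2 hne
  have hstep (i : ℕ) (hi : i ∈ Finset.range m) : 1 ≤ edist (p (t (i + 1))) (p (t i)) := by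
    have hne' : t (i + 1) ≠ b :=
      ((ht_mono (Finset.mem_range.1 hi)).trans_lt hlt).ne
    rw [ht_succ] at hne' ⊢
    rw [edist_comm, edist_dist, ((hnext_eq _ (ht_mem i)).resolve_left hne'), ENNReal.ofReal_one]
  have : (m : ENNReal) ≤ eVariationOn p (Icc a b) :=
    calc (m : ENNReal) = ∑ _i ∈ Finset.range m, 1 := by simp
      _ ≤ ∑ i ∈ Finset.range m, edist (p (t (i + 1))) (p (t i)) := Finset.sum_le_sum hstep
      _ ≤ eVariationOn p (Icc a b) := eVariationOn.sum_le ht_mono ht_mem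
  exact hm.not_ge this

end Chain

section Slim

variable {X : Type*} [MetricSpace X] {δ : ℝ}

lemma SlimTriangles.exists_dist_le_of_concat (hslim : SlimTriangles X δ)
    {f f₁ f₂ : ℝ → X} {L L₁ L₂ : ℝ} (hL₁ : 0 ≤ L₁) (hL₂ : 0 ≤ L₂)
    (hf : IsGeodesicOn f (Icc 0 L)) (hf₁ : IsGeodesicOn f₁ (Icc 0 L₁))
    (hf₂ : IsGeodesicOn f₂ (Icc 0 L₂)) (h0 : f₁ 0 = f 0) (h₁₂ : f₁ L₁ = f₂ 0) (h1 : f₂ L₂ = f L)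
    {s : ℝ} (hs : s ∈ Icc 0 L) :
    ∃ s', (s' ∈ Icc 0 L₁ ∧ dist (f s) (f₁ s') ≤ δ) ∨ (s' ∈ Icc 0 L₂ ∧ dist (f s) (f₂ s') ≤ δ) := by
  have hL : 0 ≤ L := hs.1.trans hs.2
  simpa only [sub_sub_cancel] using hslim f₁ f₂ (fun t => f (L - t)) L₁ L₂ L hL₁ hL₂ hL hf₁ hf₂
    hf.reverse h₁₂ (by simpa using h1) (by simpa using h0.symm) (L - s)
    ⟨by linarith [hs.2], by linarith [hs.1]⟩

theorem SlimTriangles.exists_dist_chain_le (hslim : SlimTriangles X δ) (hgeo : GeodesicSpace X)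
    {y : ℕ → X} (hy : ∀ i, dist (y i) (y (i + 1)) ≤ 1) (n j : ℕ) {f : ℝ → X} {L : ℝ}
    (hf : IsGeodesicOn f (Icc 0 L)) (hf0 : f 0 = y j) (hfL : f L = y (j + 2 ^ n))
    {s : ℝ} (hs : s ∈ Icc 0 L) :
    ∃ i ∈ Icc j (j + 2 ^ n), dist (f s) (y i) ≤ n * δ + 1 := by
  induction n generalizing j f L s with
  | zero =>
    refine ⟨j, ⟨le_rfl, Nat.le_add_right _ _⟩, ?_⟩
    calc dist (f s) (y j) = s := by rw [← hf0, dist_comm, hf.dist_zero hs]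
      _ ≤ dist (f 0) (f L) := by rw [hf.dist_zero ⟨hs.1.trans hs.2, le_rfl⟩]; exact hs.2
      _ ≤ (0 : ℕ) * δ + 1 := by rw [hf0, hfL]; simpa using hy j
  | succ n ih =>
    set k := j + 2 ^ n
    obtain ⟨f₁, hf₁, hf₁0, hf₁1⟩ := hgeo (y j) (y k)
    obtain ⟨f₂, hf₂, hf₂0, hf₂1⟩ := hgeo (y k) (y (k + 2 ^ n))
    have hk : k + 2 ^ n = j + 2 ^ (n + 1) := by rw [pow_succ]; omega
    obtain ⟨s', ⟨hs', hd⟩ | ⟨hs', hd⟩⟩ := hslim.exists_dist_le_of_concat dist_nonneg dist_nonneg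
      hf hf₁ hf₂ (hf₁0.trans hf0.symm) (hf₁1.trans hf₂0.symm) (by rw [hf₂1, hfL, hk]) hs
    · obtain ⟨i, hi, hdi⟩ := ih j hf₁ hf₁0 hf₁1 hs'
      refine ⟨i, ⟨hi.1, hi.2.trans (hk ▸ Nat.le_add_right k _)⟩, ?_⟩
      calc dist (f s) (y i) ≤ dist (f s) (f₁ s') + dist (f₁ s') (y i) := dist_triangle _ _ _
        _ ≤ (n + 1 : ℕ) * δ + 1 := by push_cast; linarith
    · obtain ⟨i, hi, hdi⟩ := ih k hf₂ hf₂0 hf₂1 hs'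
      refine ⟨i, ⟨(Nat.le_add_right _ _).trans hi.1, hi.2.trans hk.le⟩, ?_⟩
      calc dist (f s) (y i) ≤ dist (f s) (f₂ s') + dist (f₂ s') (y i) := dist_triangle _ _ _
        _ ≤ (n + 1 : ℕ) * δ + 1 := by push_cast; linarith

theorem SlimTriangles.exists_dist_path_le (hslim : SlimTriangles X δ) (hgeo : GeodesicSpace X)
    {p : ℝ → X} {a b : ℝ} (hab : a ≤ b) (hp : ContinuousOn p (Icc a b)) {n : ℕ}
    (hn : eVariationOn p (Icc a b) < 2 ^ n) {f : ℝ → X} {L : ℝ}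
    (hf : IsGeodesicOn f (Icc 0 L)) (hf0 : f 0 = p a) (hfL : f L = p b)
    {s : ℝ} (hs : s ∈ Icc 0 L) :
    ∃ t ∈ Icc a b, dist (f s) (p t) ≤ n * δ + 1 := by
  obtain ⟨t, ht, ht0, ht1, hstep⟩ :=
    exists_chain_of_eVariationOn_lt hab hp (m := 2 ^ n) (by exact_mod_cast hn)
  obtain ⟨i, -, hi⟩ := hslim.exists_dist_chain_le hgeo hstep n 0 hf
    (by rw [hf0, ht0]) (by rw [hfL, zero_add, ht1]) hs
  exact ⟨t i, ht i, hi⟩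

theorem SlimTriangles.exists_dist_le_of_two_mul_lt_dist (hslim : SlimTriangles X δ)
    {c₁ c₂ f : ℝ → X} {T L : ℝ} (hc₁ : IsGeodesicOn c₁ (Icc 0 T))
    (hc₂ : IsGeodesicOn c₂ (Icc 0 T)) (h0 : c₁ 0 = c₂ 0) (hL : 0 ≤ L)
    (hf : IsGeodesicOn f (Icc 0 L)) (hf0 : f 0 = c₁ T) (hfL : f L = c₂ T)
    {s : ℝ} (hs : s ∈ Icc 0 T) (hsep : 2 * δ < dist (c₁ s) (c₂ s)) :
    ∃ u ∈ Icc 0 L, dist (c₁ s) (f u) ≤ δ := by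
  have hT : 0 ≤ T := hs.1.trans hs.2
  obtain ⟨u, ⟨hu, hd⟩ | ⟨hu, hd⟩⟩ := hslim f (fun t => c₂ (T - t)) c₁ L T T hL hT hT hf
    hc₂.reverse hc₁ (by simpa using hfL) (by simpa using h0.symm) hf0.symm s hs
  · exact ⟨u, hu, hd⟩
  · have hq : T - u ∈ Icc 0 T := ⟨by linarith [hu.2], by linarith [hu.1]⟩
    have hradial : |s - (T - u)| ≤ δ := by
      have := abs_dist_sub_le (c₁ s) (c₂ (T - u)) (c₁ 0)
      rw [dist_comm (c₁ s), dist_comm (c₂ _), hc₁.dist_zero hs, h0, hc₂.dist_zero hq] at this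
      exact this.trans hd
    have := dist_triangle (c₁ s) (c₂ (T - u)) (c₂ s)
    rw [hc₂ _ hq _ hs, abs_sub_comm] at this
    linarith

theorem SlimTriangles.exists_dist_path_le_of_two_mul_lt_dist (hslim : SlimTriangles X δ)
    (hgeo : GeodesicSpace X) {c₁ c₂ : ℝ → X} {T s : ℝ} (hc₁ : IsGeodesicOn c₁ (Icc 0 T))
    (hc₂ : IsGeodesicOn c₂ (Icc 0 T)) (h0 : c₁ 0 = c₂ 0) (hs : s ∈ Icc 0 T)
    (hsep : 2 * δ < dist (c₁ s) (c₂ s)) {p : ℝ → X} {a b : ℝ} (hab : a ≤ b)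
    (hp : ContinuousOn p (Icc a b)) {n : ℕ} (hn : eVariationOn p (Icc a b) < 2 ^ n)
    (hpa : p a = c₁ T) (hpb : p b = c₂ T) :
    ∃ t ∈ Icc a b, dist (c₁ 0) (p t) ≤ s + (n + 1) * δ + 1 := by
  obtain ⟨f, hf, hf0, hfL⟩ := hgeo (c₁ T) (c₂ T)
  obtain ⟨u, hu, hsu⟩ :=
    hslim.exists_dist_le_of_two_mul_lt_dist hc₁ hc₂ h0 dist_nonneg hf hf0 hfL hs hsep
  obtain ⟨t, ht, hut⟩ := hslim.exists_dist_path_le hgeo hab hp hn hf (hf0.trans hpa.symm)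
    (hfL.trans hpb.symm) hu
  refine ⟨t, ht, ?_⟩
  calc dist (c₁ 0) (p t) ≤ dist (c₁ 0) (c₁ s) + dist (c₁ s) (f u) + dist (f u) (p t) :=
        dist_triangle4 _ _ _ _
    _ ≤ s + (n + 1) * δ + 1 := by rw [hc₁.dist_zero hs]; linarith

end Slim

open Filter Asymptotics in
lemma exists_mul_add_le_two_pow (a b : ℝ) : ∃ K : ℕ, a * K + b ≤ 2 ^ K := by
  have h : (fun n : ℕ => a * n + b) =o[atTop] fun n => (2 : ℝ) ^ n :=
    ((isLittleO_coe_const_pow_of_one_lt one_lt_two).const_mul_left a).add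
      (isLittleO_const_left.2 (Or.inr (tendsto_norm_atTop_atTop.comp
        (tendsto_pow_atTop_atTop_of_one_lt one_lt_two))))
  obtain ⟨K, hK⟩ := (h.bound one_pos).exists
  refine ⟨K, (le_abs_self _).trans ?_⟩
  simpa [abs_of_pos (pow_pos (two_pos (α := ℝ)) K)] using hK

lemma ofReal_mul_rpow_inv_pow_le {A δ : ℝ} {K : ℕ} (hA : A ≤ 2 ^ K) (r : ℕ) :
    ENNReal.ofReal (A * ((2 : ℝ) ^ (1 / δ)) ^ r) ≤ 2 ^ (K + ⌈r / δ⌉₊) := by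
  have hr : ((2 : ℝ) ^ (1 / δ)) ^ r ≤ 2 ^ ⌈r / δ⌉₊ := by
    rw [← Real.rpow_natCast, ← Real.rpow_mul zero_le_two, ← Real.rpow_natCast 2,
      one_div_mul_eq_div]
    exact Real.rpow_le_rpow_of_exponent_le one_le_two (Nat.le_ceil _)
  rw [pow_add, ← ENNReal.ofReal_ofNat 2, ← ENNReal.ofReal_pow zero_le_two,
    ← ENNReal.ofReal_pow zero_le_two, ← ENNReal.ofReal_mul (by positivity)]
  exact ENNReal.ofReal_le_ofReal (mul_le_mul hA hr (by positivity) (by positivity))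

/-- Exponential divergence of geodesics in a `δ`-hyperbolic geodesic space: there
is an exponential function `e : ℕ → ℝ` (of the form `e r = A·C^r`, depending only
on `δ`) such that for geodesics `c₁, c₂` issuing from a common point `x`, if
`d(c₁ R, c₂ R) > e 0` then any rectifiable path from `c₁(R+r)` to `c₂(R+r)`
staying outside the ball `B(x, R+r)` has length at least `e r`. -/
theorem exponential_divergence {X : Type*} [MetricSpace X] (δ : ℝ) (hδ : 0 < δ)
    (hgeo : GeodesicSpace X) (hslim : SlimTriangles X δ) :
    ∃ (e : ℕ → ℝ) (A C : ℝ), 0 < A ∧ 1 < C ∧ (∀ r : ℕ, e r = A * C ^ r) ∧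
      ∀ (R r : ℕ) (x : X) (a₁ a₂ : ℝ) (c₁ c₂ : ℝ → X),
        IsGeodesicOn c₁ (Icc 0 a₁) → IsGeodesicOn c₂ (Icc 0 a₂) →
        c₁ 0 = x → c₂ 0 = x →
        ((R : ℝ) + (r : ℝ)) ≤ min a₁ a₂ →
        e 0 < dist (c₁ (R : ℝ)) (c₂ (R : ℝ)) →
        ∀ p : ℝ → X, ContinuousOn p (Icc 0 1) →
          p 0 = c₁ ((R : ℝ) + (r : ℝ)) → p 1 = c₂ ((R : ℝ) + (r : ℝ)) →
          (∀ t ∈ Icc (0:ℝ) 1, (R : ℝ) + (r : ℝ) ≤ dist x (p t)) →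
          ENNReal.ofReal (e r) ≤ eVariationOn p (Icc 0 1) := by
  -- `A = 2 * M + 2 * δ ≤ 2 ^ K`
  obtain ⟨K, hK⟩ := exists_mul_add_le_two_pow (2 * δ) (6 * δ + 2)
  set M : ℝ := K * δ + 2 * δ + 1
  refine ⟨fun r => (2 * M + 2 * δ) * (2 ^ (1 / δ)) ^ r, 2 * M + 2 * δ, 2 ^ (1 / δ),
    by positivity, Real.one_lt_rpow one_lt_two (by positivity), fun r => rfl, ?_⟩
  intro R r x a₁ a₂ c₁ c₂ hc₁ hc₂ hc₁0 hc₂0 hmin hsep p hp hp0 hp1 hout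
  rw [← not_lt]
  intro hlen
  set T : ℝ := R + r
  have hc₁T := hc₁.mono (Icc_subset_Icc_right (hmin.trans (min_le_left _ _)))
  have hc₂T := hc₂.mono (Icc_subset_Icc_right (hmin.trans (min_le_right _ _)))
  have hRT : (R : ℝ) ≤ T := le_add_of_nonneg_right r.cast_nonneg
  have hc₁R := hc₁T.mono (Icc_subset_Icc_right hRT)
  have hc₂R := hc₂T.mono (Icc_subset_Icc_right hRT)
  simp only [pow_zero, mul_one] at hsep
  have hMR : M ≤ R := by
    linarith [hc₁R.dist_le_two_mul hc₂R (hc₁0.trans hc₂0.symm) R.cast_nonneg]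
  have hM : 0 ≤ M := by positivity
  have hsep' : 2 * δ < dist (c₁ (R - M)) (c₂ (R - M)) := by
    linarith [hc₁R.dist_le_dist_sub_add hc₂R ⟨hM, hMR⟩]
  obtain ⟨t, ht, hpt⟩ := hslim.exists_dist_path_le_of_two_mul_lt_dist hgeo hc₁T hc₂T
    (hc₁0.trans hc₂0.symm) ⟨sub_nonneg.2 hMR, by linarith⟩ hsep' zero_le_one hp
    (hlen.trans_le (ofReal_mul_rpow_inv_pow_le (by linarith) r)) hp0 hp1
  have hceil : ⌈r / δ⌉₊ * δ < r + δ := by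
    have := Nat.ceil_lt_add_one (div_nonneg r.cast_nonneg hδ.le)
    rwa [← lt_div_iff₀ hδ, add_div, div_self hδ.ne']
  rw [hc₁0] at hpt
  push_cast at hpt
  linarith [hout t ht]
end
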